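/- Let n ≥ 2 be even, let ρ = |W_n⟩⟨W_n| be the W-state projector, and let ρ' be any n-qubit quantum state with ‖ρ − ρ'‖₁ ≤ 1/10. Then for every ε with 0 ≤ ε < 2/n², the cumulative distribution function of ρ' satisfies F_{ρ'}(ε) ≤ 5·‖ρ − ρ'‖₁. -/

import Mathlib

/-
The Pauli expectations of the W state are `⟨P_a⟩_W = (1/n) ∑ᵢ ∑ⱼ (P_a)_{eᵢ eⱼ}`, where `eᵢ` are the
weight-one strings. The entries of `P_a` are Gaussian integers, the off-diagonal terms pair up into
twice an integer because `P_a` is Hermitian, and since `σ_b(1,1) ≡ σ_b(0,0) mod 2` the `n` diagonal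
terms are congruent mod 2. So for even `n` the double sum is an even integer and `⟨P_a⟩_W` is either
`0` or at least `2/n` in absolute value. Consequently, if `⟨P_a⟩_ρ'² ≤ ε < 2/n²`, the difference
`Δ = W - ρ'` has `⟨P_a⟩_ρ'² ≤ 7 ⟨P_a⟩_Δ²`. Summing over `a` with Parseval,
`∑ₐ ⟨P_a⟩_Δ² = 2ⁿ ‖Δ‖_F²`, and using `‖Δ‖_F ≤ ‖Δ‖₁ = t` and `tr ρ'² ≥ (1 - t)²` gives
`F_ρ'(ε) ≤ 7 t² / (1 - t)² ≤ 5 t` for `t ≤ 1/10`.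
-/

open Matrix Kronecker
open scoped ComplexOrder

noncomputable def pauli1 : Fin 4 → Matrix (Fin 2) (Fin 2) ℂ
  | 0 => !![1, 0; 0, 1]
  | 1 => !![0, 1; 1, 0]
  | 2 => !![0, -Complex.I; Complex.I, 0]
  | 3 => !![1, 0; 0, -1]

noncomputable def PauliOp {n : ℕ} (a : Fin n → Fin 4) :
    Matrix (Fin n → Fin 2) (Fin n → Fin 2) ℂ :=
  Matrix.of fun z z' => ∏ i, pauli1 (a i) (z i) (z' i)

/-- The trace norm of a matrix: the trace of the positive semidefinite square root of `Aᴴ * A`. -/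
noncomputable def traceNorm {m : Type*} [Fintype m] [DecidableEq m]
    (A : Matrix m m ℂ) : ℝ :=
  (((Matrix.posSemidef_conjTranspose_mul_self A).1.eigenvectorUnitary : Matrix m m ℂ) *
    Matrix.diagonal (fun i => ((Real.sqrt
      ((Matrix.posSemidef_conjTranspose_mul_self A).1.eigenvalues i) : ℝ) : ℂ)) *
    (star (Matrix.posSemidef_conjTranspose_mul_self A).1.eigenvectorUnitary :
      Matrix m m ℂ)).trace.re

/-- A quantum state: positive semidefinite with unit trace. -/
structure IsState {m : Type*} [Fintype m] (ρ : Matrix m m ℂ) : Prop where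
  posSemidef : ρ.PosSemidef
  trace_one : ρ.trace = 1

/-- Pauli expectation value `⟨P_a⟩_ρ`. -/
noncomputable def pExp {n : ℕ} (ρ : Matrix (Fin n → Fin 2) (Fin n → Fin 2) ℂ)
    (a : Fin n → Fin 4) : ℝ := ((PauliOp a * ρ).trace).re

/-- The purity `tr ρ²`. -/
noncomputable def purity {m : Type*} [Fintype m] (ρ : Matrix m m ℂ) : ℝ :=
  ((ρ * ρ).trace).re

/-- The Pauli distribution `p_ρ`. -/
noncomputable def pDist {n : ℕ} (ρ : Matrix (Fin n → Fin 2) (Fin n → Fin 2) ℂ)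
    (a : Fin n → Fin 4) : ℝ := (pExp ρ a) ^ 2 / (2 ^ n * purity ρ)

/-- The cumulative distribution function `F_ρ`. -/
noncomputable def cdf {n : ℕ} (ρ : Matrix (Fin n → Fin 2) (Fin n → Fin 2) ℂ)
    (ε : ℝ) : ℝ := ∑ a : Fin n → Fin 4, if (pExp ρ a) ^ 2 ≤ ε then pDist ρ a else 0

/-- The maximally entangled state `|Φ₀⟩`. -/
noncomputable def Phi0 (n : ℕ) : (Fin n → Fin 2) × (Fin n → Fin 2) → ℂ :=
  fun p => if p.1 = p.2 then (↑(Real.sqrt (2 ^ n)))⁻¹ else 0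

/-- The Bell state `|Φ_a⟩ = (1 ⊗ P_a)|Φ₀⟩`. -/
noncomputable def BellVec {n : ℕ} (a : Fin n → Fin 4) :
    (Fin n → Fin 2) × (Fin n → Fin 2) → ℂ :=
  ((1 : Matrix (Fin n → Fin 2) (Fin n → Fin 2) ℂ) ⊗ₖ PauliOp a).mulVec (Phi0 n)

/-- The Bell distribution `q_ρ(a) = ⟨Φ_a| ρ ⊗ ρ |Φ_a⟩`. -/
noncomputable def qDist {n : ℕ} (ρ : Matrix (Fin n → Fin 2) (Fin n → Fin 2) ℂ)
    (a : Fin n → Fin 4) : ℝ :=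
  (star (BellVec a) ⬝ᵥ ((ρ ⊗ₖ ρ).mulVec (BellVec a))).re

/-- The W state. -/
noncomputable def Wstate (n : ℕ) : (Fin n → Fin 2) → ℂ :=
  fun z => if (∑ i, (z i : ℕ)) = 1 then (↑(Real.sqrt n))⁻¹ else 0

/-- The W state projector `|W_n⟩⟨W_n|`. -/
noncomputable def Wproj (n : ℕ) : Matrix (Fin n → Fin 2) (Fin n → Fin 2) ℂ :=
  Matrix.vecMulVec (Wstate n) (star (Wstate n))

open Finset
open scoped Matrix.Norms.Frobenius

lemma Matrix.IsHermitian.ofReal_re_trace_mul {m : Type*} [Fintype m] {A B : Matrix m m ℂ}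
    (hA : A.IsHermitian) (hB : B.IsHermitian) : (((A * B).trace.re : ℝ) : ℂ) = (A * B).trace := by
  refine Complex.conj_eq_iff_re.mp ?_
  rw [← Complex.star_def, ← trace_conjTranspose, conjTranspose_mul, hA.eq, hB.eq, trace_mul_comm]

lemma re_trace_conjTranspose_mul_self {m : Type*} [Fintype m] (A : Matrix m m ℂ) :
    (Aᴴ * A).trace.re = ‖A‖ ^ 2 := by
  rw [frobenius_norm_def, ← Real.sqrt_eq_rpow, Real.sq_sqrt (by positivity), sum_comm]
  simp only [trace, Matrix.diag, mul_apply, conjTranspose_apply, Complex.re_sum, Real.rpow_two,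
    Complex.star_def, Complex.conj_mul', ← Complex.ofReal_pow, Complex.ofReal_re]

lemma purity_eq_norm_sq {m : Type*} [Fintype m] {A : Matrix m m ℂ} (hA : A.IsHermitian) :
    purity A = ‖A‖ ^ 2 := by
  rw [purity, ← re_trace_conjTranspose_mul_self, hA.eq]

lemma traceNorm_eq_sum_sqrt_eigenvalues {m : Type*} [Fintype m] [DecidableEq m]
    (A : Matrix m m ℂ) :
    traceNorm A = ∑ i, √((posSemidef_conjTranspose_mul_self A).1.eigenvalues i) := by
  rw [traceNorm, trace_mul_cycle, Unitary.star_mul_self_of_mem (SetLike.coe_mem _), one_mul,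
    trace_diagonal, Complex.re_sum]
  simp

lemma norm_le_traceNorm {m : Type*} [Fintype m] [DecidableEq m] (A : Matrix m m ℂ) :
    ‖A‖ ≤ traceNorm A := by
  have hAA := posSemidef_conjTranspose_mul_self A
  have hsq : ‖A‖ ^ 2 = ∑ i, √(hAA.1.eigenvalues i) ^ 2 := by
    rw [← re_trace_conjTranspose_mul_self, hAA.1.trace_eq_sum_eigenvalues, Complex.re_sum]
    simp [Real.sq_sqrt (hAA.eigenvalues_nonneg _)]
  rw [traceNorm_eq_sum_sqrt_eigenvalues, ← pow_le_pow_iff_left₀ (norm_nonneg A)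
    (sum_nonneg fun i _ => Real.sqrt_nonneg _) two_ne_zero, hsq]
  exact sum_sq_le_sq_sum_of_nonneg fun i _ => Real.sqrt_nonneg _

lemma sq_norm_sub_traceNorm_le_purity {m : Type*} [Fintype m] [DecidableEq m]
    {σ ρ : Matrix m m ℂ} (hρ : ρ.IsHermitian) (h : traceNorm (σ - ρ) ≤ ‖σ‖) :
    (‖σ‖ - traceNorm (σ - ρ)) ^ 2 ≤ purity ρ := by
  have htri := norm_sub_norm_le σ (σ - ρ)
  rw [sub_sub_cancel] at htri
  rw [purity_eq_norm_sq hρ]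
  exact pow_le_pow_left₀ (sub_nonneg.mpr h) (by linarith [norm_le_traceNorm (σ - ρ)]) 2

lemma pauli1_conj (b : Fin 4) (x y : Fin 2) :
    starRingEnd ℂ (pauli1 b x y) = pauli1 b y x := by
  fin_cases b <;> fin_cases x <;> fin_cases y <;> simp [pauli1]

lemma sum_pauli1_mul_pauli1 (x y x' y' : Fin 2) :
    ∑ b, pauli1 b x y * pauli1 b x' y' = if x = y' ∧ y = x' then 2 else 0 := by
  fin_cases x <;> fin_cases y <;> fin_cases x' <;> fin_cases y' <;>
    simp [Fin.sum_univ_four, pauli1] <;> ring_nf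

lemma PauliOp_isHermitian {n : ℕ} (a : Fin n → Fin 4) : (PauliOp a).IsHermitian := by
  ext z z'
  simp [PauliOp, pauli1_conj]

lemma sum_PauliOp_apply_mul_PauliOp_apply {n : ℕ} (z w z' w' : Fin n → Fin 2) :
    ∑ a, PauliOp a z w * PauliOp a z' w' = if z = w' ∧ w = z' then 2 ^ n else 0 := by
  simp_rw [PauliOp, of_apply, ← prod_mul_distrib]
  rw [← Fintype.prod_sum (fun k b => pauli1 b (z k) (w k) * pauli1 b (z' k) (w' k))]
  simp_rw [sum_pauli1_mul_pauli1, Fintype.prod_ite_zero, prod_const, card_univ,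
    Fintype.card_fin, funext_iff, forall_and]

lemma sum_trace_PauliOp_mul_smul {n : ℕ} (A : Matrix (Fin n → Fin 2) (Fin n → Fin 2) ℂ) :
    ∑ a, (PauliOp a * A).trace • PauliOp a = (2 : ℂ) ^ n • A := by
  ext z' w'
  simp only [Matrix.sum_apply, Matrix.smul_apply, smul_eq_mul, trace, Matrix.diag, mul_apply,
    sum_mul]
  calc _ = ∑ z, ∑ w, A w z * ∑ a, PauliOp a z w * PauliOp a z' w' := by
        rw [sum_comm]
        refine sum_congr rfl fun z _ => ?_
        rw [sum_comm]
        simp_rw [mul_sum]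
        exact sum_congr rfl fun w _ => sum_congr rfl fun a _ => by ring
    _ = 2 ^ n * A z' w' := by
        simp [sum_PauliOp_apply_mul_PauliOp_apply, ite_and, mul_comm]

lemma sum_trace_PauliOp_mul_sq {n : ℕ} (A : Matrix (Fin n → Fin 2) (Fin n → Fin 2) ℂ) :
    ∑ a, (PauliOp a * A).trace ^ 2 = 2 ^ n * (A * A).trace := by
  have h : ∑ a, (PauliOp a * A).trace ^ 2 =
      ((∑ a, (PauliOp a * A).trace • PauliOp a) * A).trace := by
    rw [sum_mul, trace_sum]
    refine sum_congr rfl fun a _ => ?_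
    rw [Matrix.smul_mul, trace_smul, smul_eq_mul, sq]
  rw [h, sum_trace_PauliOp_mul_smul, Matrix.smul_mul, trace_smul, smul_eq_mul]

lemma sum_pExp_sq {n : ℕ} {A : Matrix (Fin n → Fin 2) (Fin n → Fin 2) ℂ} (hA : A.IsHermitian) :
    ∑ a, pExp A a ^ 2 = 2 ^ n * ‖A‖ ^ 2 := by
  apply Complex.ofReal_injective
  push_cast
  simp_rw [pExp, (PauliOp_isHermitian _).ofReal_re_trace_mul hA]
  rw [sum_trace_PauliOp_mul_sq, ← hA.ofReal_re_trace_mul hA, ← purity, purity_eq_norm_sq hA]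
  norm_cast

lemma pExp_sub {n : ℕ} (A B : Matrix (Fin n → Fin 2) (Fin n → Fin 2) ℂ) (a : Fin n → Fin 4) :
    pExp (A - B) a = pExp A a - pExp B a := by
  rw [pExp, pExp, pExp, mul_sub, trace_sub, Complex.sub_re]

lemma cdf_le_mul_norm_sq_div_purity {n : ℕ} {ρ Δ : Matrix (Fin n → Fin 2) (Fin n → Fin 2) ℂ}
    (hΔ : Δ.IsHermitian) (hρ : 0 < purity ρ) {C ε : ℝ} (hC : 0 ≤ C)
    (h : ∀ a, pExp ρ a ^ 2 ≤ ε → pExp ρ a ^ 2 ≤ C * pExp Δ a ^ 2) :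
    cdf ρ ε ≤ C * ‖Δ‖ ^ 2 / purity ρ := by
  have hpos : 0 < 2 ^ n * purity ρ := mul_pos (by positivity) hρ
  calc cdf ρ ε ≤ ∑ a, C * pExp Δ a ^ 2 / (2 ^ n * purity ρ) := by
        refine sum_le_sum fun a _ => ?_
        split_ifs with ha
        · exact div_le_div_of_nonneg_right (h a ha) hpos.le
        · positivity
    _ = C * ‖Δ‖ ^ 2 / purity ρ := by
        rw [← sum_div, ← mul_sum, sum_pExp_sq hΔ]
        field_simp

lemma Finset.sum_sum_eq_sum_add_two_nsmul_of_symm {ι M : Type*} [Fintype ι] [LinearOrder ι]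
    [AddCommMonoid M] (f : ι → ι → M) (hf : ∀ i j, f i j = f j i) :
    ∑ i, ∑ j, f i j = ∑ i, f i i + 2 • ∑ i, ∑ j with i < j, f i j := by
  have hsplit : ∀ i j, f i j =
      ((if i < j then f i j else 0) + if i = j then f i j else 0) + if j < i then f j i else 0 := by
    intro i j
    rcases lt_trichotomy i j with h | rfl | h
    · simp [h, h.ne, h.not_gt]
    · simp
    · simp [h, h.ne', h.not_gt, hf i j]
  rw [sum_congr rfl fun i _ => sum_congr rfl fun j _ => hsplit i j]
  simp only [sum_add_distrib, sum_ite_eq, mem_univ, if_true, sum_filter, two_nsmul]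
  rw [sum_comm (f := fun i j => if j < i then f j i else 0)]
  abel

lemma pauli1_mem_range (b : Fin 4) (x y : Fin 2) : pauli1 b x y ∈ GaussianInt.toComplex.range := by
  have hI : Complex.I ∈ GaussianInt.toComplex.range := ⟨⟨0, 1⟩, by simp [GaussianInt.toComplex_def]⟩
  fin_cases b <;> fin_cases x <;> fin_cases y <;> simp [pauli1, hI, one_mem, zero_mem]

lemma PauliOp_apply_mem_range {n : ℕ} (a : Fin n → Fin 4) (z w : Fin n → Fin 2) :
    PauliOp a z w ∈ GaussianInt.toComplex.range := by
  rw [PauliOp, of_apply]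
  exact Subring.prod_mem _ fun k _ => pauli1_mem_range (a k) (z k) (w k)

lemma exists_re_eq_intCast_of_mem_range {x : ℂ} (hx : x ∈ GaussianInt.toComplex.range) :
    ∃ m : ℤ, x.re = m := by
  obtain ⟨y, rfl⟩ := hx
  exact ⟨y.re, (GaussianInt.intCast_re y).symm⟩

lemma pauli1_one_one (b : Fin 4) : pauli1 b 1 1 = pauli1 b 0 0 - 2 * if b = 3 then 1 else 0 := by
  fin_cases b <;> norm_num [pauli1, Fin.ext_iff]

lemma exists_sum_PauliOp_single_single_eq_two_mul {n : ℕ} (hn : Even n) (a : Fin n → Fin 4) :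
    ∃ w ∈ GaussianInt.toComplex.range,
      ∑ i, PauliOp a (Pi.single i 1) (Pi.single i 1) = 2 * w := by
  set E : Fin n → ℂ := fun i => ∏ k ∈ univ.erase i, pauli1 (a k) 0 0
  have hdiag : ∀ i, PauliOp a (Pi.single i 1) (Pi.single i 1) =
      ∏ k, pauli1 (a k) 0 0 - 2 * ((if a i = 3 then 1 else 0) * E i) := by
    intro i
    have hE : ∏ k ∈ univ.erase i, pauli1 (a k) ((Pi.single i 1 : Fin n → Fin 2) k)
        ((Pi.single i 1 : Fin n → Fin 2) k) = E i :=
      prod_congr rfl fun k hk => by rw [Pi.single_eq_of_ne (ne_of_mem_erase hk)]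
    rw [PauliOp, of_apply, ← mul_prod_erase _ _ (mem_univ i), ← mul_prod_erase _ _ (mem_univ i),
      hE, Pi.single_eq_same, pauli1_one_one]
    ring
  obtain ⟨m, rfl⟩ := hn
  refine ⟨m * ∏ k, pauli1 (a k) 0 0 - ∑ i, (if a i = 3 then 1 else 0) * E i, ?_, ?_⟩
  · have hE : ∀ i, E i ∈ GaussianInt.toComplex.range := fun i =>
      Subring.prod_mem _ fun k _ => pauli1_mem_range _ _ _
    have hind : ∀ i, (if a i = 3 then 1 else 0 : ℂ) ∈ GaussianInt.toComplex.range := fun i => by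
      split_ifs
      exacts [one_mem _, zero_mem _]
    exact sub_mem (mul_mem (natCast_mem _ m) (Subring.prod_mem _ fun k _ => pauli1_mem_range _ _ _))
      (sum_mem fun i _ => mul_mem (hind i) (hE i))
  · simp_rw [hdiag, sum_sub_distrib, sum_const, card_univ, Fintype.card_fin, ← mul_sum]
    ring

lemma exists_re_sum_sum_PauliOp_single_eq_two_mul {n : ℕ} (hn : Even n) (a : Fin n → Fin 4) :
    ∃ m : ℤ, (∑ i, ∑ j, PauliOp a (Pi.single i 1) (Pi.single j 1)).re = 2 * m := by
  obtain ⟨w, hwR, hw⟩ := exists_sum_PauliOp_single_single_eq_two_mul hn a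
  obtain ⟨k, hk⟩ := exists_re_eq_intCast_of_mem_range hwR
  choose m hm using fun i j : Fin n =>
    exists_re_eq_intCast_of_mem_range (PauliOp_apply_mem_range a (Pi.single i 1) (Pi.single j 1))
  have hsymm : ∀ i j : Fin n, (PauliOp a (Pi.single i 1) (Pi.single j 1)).re =
      (PauliOp a (Pi.single j 1) (Pi.single i 1)).re := fun i j => by
    rw [← (PauliOp_isHermitian a).apply, Complex.star_def, Complex.conj_re]
  refine ⟨k + ∑ i, ∑ j with i < j, m i j, ?_⟩
  simp_rw [Complex.re_sum]
  rw [sum_sum_eq_sum_add_two_nsmul_of_symm _ hsymm, ← Complex.re_sum, hw]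
  simp [hk, hm]
  ring

lemma sum_val_single {n : ℕ} (i : Fin n) :
    ∑ k, ((Pi.single i (1 : Fin 2) : Fin n → Fin 2) k : ℕ) = 1 := by
  simp [Pi.single_apply, apply_ite]

lemma single_one_injective (n : ℕ) :
    Function.Injective (fun i : Fin n => (Pi.single i 1 : Fin n → Fin 2)) := by
  intro i j h
  simpa [Pi.single_apply, eq_comm] using congrFun h i

lemma sum_val_eq_one_iff {n : ℕ} (z : Fin n → Fin 2) :
    ∑ k, (z k : ℕ) = 1 ↔ ∃ i, Pi.single i 1 = z := by
  refine ⟨fun h => ?_, fun ⟨i, hi⟩ => hi ▸ sum_val_single i⟩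
  have hval : ∀ b : Fin 2, (b : ℕ) = if b = 1 then 1 else 0 := by decide
  simp_rw [hval, sum_boole, Nat.cast_id, card_eq_one] at h
  obtain ⟨i, hi⟩ := h
  refine ⟨i, funext fun k => ?_⟩
  have hk := congrArg (k ∈ ·) hi
  simp only [mem_filter, mem_univ, true_and, mem_singleton, eq_iff_iff] at hk
  rw [Pi.single_apply]
  split_ifs with hki
  · exact (hk.mpr hki).symm
  · have : z k ≠ 1 := fun h => hki (hk.mp h)
    omega

lemma sum_ite_sum_val_eq_one {n : ℕ} {M : Type*} [AddCommMonoid M] (f : (Fin n → Fin 2) → M) :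
    ∑ z, (if ∑ k, (z k : ℕ) = 1 then f z else 0) = ∑ i, f (Pi.single i 1) := by
  have himage : univ.filter (fun z : Fin n → Fin 2 => ∑ k, (z k : ℕ) = 1) =
      univ.image (fun i => Pi.single i 1) := by
    ext z
    simp [sum_val_eq_one_iff]
  rw [← sum_filter, himage, sum_image fun i _ j _ h => single_one_injective n h]

lemma Wstate_single {n : ℕ} (i : Fin n) : Wstate n (Pi.single i 1) = (√(n : ℝ) : ℂ)⁻¹ :=
  if_pos (sum_val_single i)

lemma ofReal_inv_sqrt_mul_star (n : ℕ) : (√(n : ℝ) : ℂ)⁻¹ * star (√(n : ℝ) : ℂ)⁻¹ = (n : ℂ)⁻¹ := by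
  rw [star_inv₀, Complex.star_def, Complex.conj_ofReal, ← mul_inv, ← Complex.ofReal_mul,
    Real.mul_self_sqrt n.cast_nonneg, Complex.ofReal_natCast]

lemma Wproj_single_apply {n : ℕ} (i j : Fin n) :
    Wproj n (Pi.single i 1) (Pi.single j 1) = (n : ℂ)⁻¹ := by
  rw [Wproj, vecMulVec_apply, Pi.star_apply, Wstate_single, Wstate_single, ofReal_inv_sqrt_mul_star]

lemma trace_mul_Wproj {n : ℕ} (M : Matrix (Fin n → Fin 2) (Fin n → Fin 2) ℂ) :
    (M * Wproj n).trace = (n : ℂ)⁻¹ * ∑ i, ∑ j, M (Pi.single i 1) (Pi.single j 1) := by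
  have hterm : ∀ z, ∑ w, M z w * (Wstate n w * star (Wstate n z)) =
      if ∑ k, (z k : ℕ) = 1 then
        ∑ w, (if ∑ k, (w k : ℕ) = 1 then (n : ℂ)⁻¹ * M z w else 0) else 0 := by
    intro z
    unfold Wstate
    split_ifs <;> simp [← ofReal_inv_sqrt_mul_star, mul_comm]
  simp only [trace, Matrix.diag, mul_apply, Wproj, vecMulVec_apply, Pi.star_apply, hterm,
    sum_ite_sum_val_eq_one, mul_sum]

lemma norm_Wproj {n : ℕ} (hn : n ≠ 0) : ‖Wproj n‖ = 1 := by
  refine (pow_eq_one_iff_of_nonneg (norm_nonneg _) two_ne_zero).mp ?_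
  rw [← re_trace_conjTranspose_mul_self, trace_mul_Wproj]
  have hn' : (n : ℂ) ≠ 0 := Nat.cast_ne_zero.mpr hn
  simp only [conjTranspose_apply, Wproj_single_apply, star_inv₀, star_natCast, sum_const,
    card_univ, Fintype.card_fin, nsmul_eq_mul]
  rw [mul_inv_cancel₀ hn', mul_one, inv_mul_cancel₀ hn', Complex.one_re]

lemma pExp_Wproj_eq_zero_or {n : ℕ} (hn : Even n) (a : Fin n → Fin 4) :
    pExp (Wproj n) a = 0 ∨ 4 / (n : ℝ) ^ 2 ≤ pExp (Wproj n) a ^ 2 := by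
  obtain ⟨m, hm⟩ := exists_re_sum_sum_PauliOp_single_eq_two_mul hn a
  have hexp : pExp (Wproj n) a = 2 * m / n := by
    rw [pExp, trace_mul_Wproj, ← Complex.ofReal_natCast, ← Complex.ofReal_inv,
      Complex.re_ofReal_mul, hm]
    ring
  rcases eq_or_ne m 0 with rfl | hm0
  · simp [hexp]
  · right
    have hm1 : (1 : ℝ) ≤ (m : ℝ) ^ 2 := by
      have : (1 : ℤ) ≤ m ^ 2 := by nlinarith [Int.one_le_abs hm0, sq_abs m]
      exact_mod_cast this
    rw [hexp, div_pow]
    gcongr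
    nlinarith

lemma sq_pExp_le_seven_mul_sq_pExp_sub {n : ℕ} (hn : Even n)
    (ρ : Matrix (Fin n → Fin 2) (Fin n → Fin 2) ℂ) (a : Fin n → Fin 4) {ε : ℝ}
    (hε : ε < 2 / (n : ℝ) ^ 2) (ha : pExp ρ a ^ 2 ≤ ε) :
    pExp ρ a ^ 2 ≤ 7 * pExp (Wproj n - ρ) a ^ 2 := by
  rw [pExp_sub]
  rcases pExp_Wproj_eq_zero_or hn a with h0 | hgap
  · rw [h0]
    nlinarith [sq_nonneg (pExp ρ a)]
  · have : 2 * pExp ρ a ^ 2 < pExp (Wproj n) a ^ 2 := by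
      have : 4 / (n : ℝ) ^ 2 = 2 * (2 / (n : ℝ) ^ 2) := by ring
      linarith
    -- `|w - r| ≥ (√2 - 1) |r|` once `2 r² < w²`, and `(√2 - 1)⁻² < 7`
    nlinarith [sq_nonneg (5 * pExp (Wproj n) a - 7 * pExp ρ a)]

/-- For `ρ = |W_n⟩⟨W_n|` (with `n ≥ 2` even) and any `n`-qubit
state `ρ'` with `‖ρ − ρ'‖₁ ≤ 1/10`, for all `0 ≤ ε < 2/n²` one has
`F_{ρ'}(ε) ≤ 5‖ρ − ρ'‖₁`. -/
theorem stmt_15 {n : ℕ} (hn : 2 ≤ n) (hne : Even n)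
    (ρ' : Matrix (Fin n → Fin 2) (Fin n → Fin 2) ℂ) (hρ' : IsState ρ')
    (hclose : traceNorm (Wproj n - ρ') ≤ 1 / 10) :
    ∀ ε : ℝ, 0 ≤ ε → ε < 2 / (n : ℝ) ^ 2 →
      cdf ρ' ε ≤ 5 * traceNorm (Wproj n - ρ') := by
  intro ε _ hε
  set t := traceNorm (Wproj n - ρ')
  have hΔ : ‖Wproj n - ρ'‖ ≤ t := norm_le_traceNorm _
  have ht : 0 ≤ t := (norm_nonneg _).trans hΔ
  have ht1 : 0 < 1 - t := by linarith
  have hW : ‖Wproj n‖ = 1 := norm_Wproj (by omega)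
  have hpurity : (1 - t) ^ 2 ≤ purity ρ' := by
    have := sq_norm_sub_traceNorm_le_purity (σ := Wproj n) hρ'.posSemidef.isHermitian
      (by rw [hW]; linarith)
    rwa [hW] at this
  have hΔH : (Wproj n - ρ').IsHermitian :=
    (posSemidef_vecMulVec_self_star (Wstate n)).isHermitian.sub hρ'.posSemidef.isHermitian
  calc cdf ρ' ε ≤ 7 * ‖Wproj n - ρ'‖ ^ 2 / purity ρ' :=
        cdf_le_mul_norm_sq_div_purity hΔH ((pow_pos ht1 2).trans_le hpurity) (by norm_num)
          fun a ha => sq_pExp_le_seven_mul_sq_pExp_sub hne ρ' a hε ha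
    _ ≤ 7 * t ^ 2 / (1 - t) ^ 2 := by gcongr
    _ ≤ 5 * t := by
        rw [div_le_iff₀ (pow_pos ht1 2)]
        nlinarith
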